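/- arXiv:1703.01815 — 3 statements merged into one kernel-verified Lean document; each statement's English description precedes it below -/
import Mathlib

section
/- Let X be a separable metric space, ξ a continuous semiflow on X, and A, B subsets of X satisfying: (B1) if a semiorbit q starts in B at time t0 and remains in A on [t0,t1], then it remains in B on [t0,t1]; (B2) there exists λ>0 such that any semiorbit starting in A∩B at time t0 remains in A on [t0,t0+λ]. Then A∩B is forward invariant under ξ. -/
/-- Nesting lemma: if `B` is `A`-relatively invariant (B1) and every point of `A ∩ B`
stays in `A` for a uniform time `λ` (B2), then `A ∩ B` is forward invariant under the
continuous semiflow `ξ` on a separable metric space `X`. -/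
theorem nesting_invariance
    {X : Type*} [MetricSpace X] [TopologicalSpace.SeparableSpace X]
    (ξ : ℝ → X → X)
    (hcont : Continuous fun p : ℝ × X => ξ p.1 p.2)
    (hid : ∀ x, ξ 0 x = x)
    (hsemigroup : ∀ s t : ℝ, 0 ≤ s → 0 ≤ t → ∀ x, ξ (t + s) x = ξ t (ξ s x))
    (A B : Set X)
    (hB1 : ∀ (x : X) (t1 : ℝ), 0 ≤ t1 → x ∈ B →
      (∀ t ∈ Set.Icc (0:ℝ) t1, ξ t x ∈ A) → ∀ t ∈ Set.Icc (0:ℝ) t1, ξ t x ∈ B)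
    (hB2 : ∃ lam > (0:ℝ), ∀ x ∈ A ∩ B, ∀ t ∈ Set.Icc (0:ℝ) lam, ξ t x ∈ A) :
    ∀ x ∈ A ∩ B, ∀ t : ℝ, 0 ≤ t → ξ t x ∈ A ∩ B := by
  obtain ⟨lam, hlam, hB2⟩ := hB2
  -- one step: from a point of A ∩ B, the orbit stays in A ∩ B on [0, lam]
  have step : ∀ x ∈ A ∩ B, ∀ t ∈ Set.Icc (0:ℝ) lam, ξ t x ∈ A ∩ B := by
    intro x hx t ht
    have hA : ∀ t ∈ Set.Icc (0:ℝ) lam, ξ t x ∈ A := hB2 x hx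
    exact ⟨hA t ht, hB1 x lam hlam.le hx.2 hA t ht⟩
  -- by induction: orbit stays in A ∩ B on [0, n • lam]
  have key : ∀ n : ℕ, ∀ x ∈ A ∩ B, ∀ t ∈ Set.Icc (0:ℝ) (n * lam), ξ t x ∈ A ∩ B := by
    intro n
    induction n with
    | zero =>
      intro x hx t ht
      simp only [Nat.cast_zero, zero_mul] at ht
      have : t = 0 := le_antisymm ht.2 ht.1
      simpa [this, hid] using hx
    | succ n ih =>
      intro x hx t ht
      rcases le_or_gt t (n * lam) with h | h
      · exact ih x hx t ⟨ht.1, h⟩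
      · have hn : (0:ℝ) ≤ n * lam := by positivity
        have h1 : ξ t x = ξ (t - n * lam) (ξ (n * lam) x) := by
          have := hsemigroup (n * lam) (t - n * lam) hn (by linarith) x
          simpa using this
        rw [h1]
        have hmid : ξ (n * lam) x ∈ A ∩ B := ih x hx (n * lam) ⟨hn, le_refl _⟩
        refine step _ hmid _ ⟨by linarith, ?_⟩
        have : ((n : ℝ) + 1) * lam = n * lam + lam := by ring
        have ht2 := ht.2
        push_cast at ht2
        linarith [this ▸ ht2]
  intro x hx t ht
  obtain ⟨n, hn⟩ := exists_nat_ge (t / lam)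
  have hnt : t ≤ n * lam := by
    rw [div_le_iff₀ hlam] at hn
    linarith
  exact key n x hx t ⟨ht, hnt⟩
end

section
/- Let S be a homeomorphism of a compact metric space, ν an S-invariant measure that G-shadows an S-ergodic measure μ via a factor map θ with μ-full set M₁, and assume that for each D ∈ G, θ^{-1}(M₁ ∩ D) ⊆ D. Then almost every measure in the ergodic decomposition of ν also G-shadows μ. -/
/-!
Push every ergodic component `m` of `ν` forward by `θ`. Averaging these pushforwards over any
set `E` of components gives an `S`-invariant measure bounded by `θ_* ν = μ`, hence a multiple of
`μ` by ergodicity, and the multiple is `χ E`. So `θ_* m` and `μ` agree χ-a.e. on each Borel set,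
hence, testing on a countable generating π-system, `θ_* m = μ` for χ-a.e. `m`. For such `m` and
`D ∈ G`, the separation property gives `μ D = μ (M₁ ∩ D) ≤ m D`, and likewise for `Dᶜ`.
-/

open MeasureTheory MeasurableSpace Set

lemma Set.Countable.generatePiSystem {α : Type*} {S : Set (Set α)} (hS : S.Countable) :
    (generatePiSystem S).Countable := by
  refine ((countable_ofPred_finite_subset hS).image sInter).mono fun s hs => ?_
  induction hs with
  | base h => exact ⟨{_}, ⟨finite_singleton _, singleton_subset_iff.2 h⟩, sInter_singleton _⟩
  | inter _ _ _ ihs iht =>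
    obtain ⟨u, ⟨hu, huS⟩, rfl⟩ := ihs
    obtain ⟨v, ⟨hv, hvS⟩, rfl⟩ := iht
    exact ⟨u ∪ v, ⟨hu.union hv, union_subset huS hvS⟩, sInter_union u v⟩

namespace MeasureTheory

variable {α ι : Type*} [MeasurableSpace α] [MeasurableSpace ι]

lemma Measure.ae_eq_of_forall_ae_apply_eq [CountablyGenerated α] {μ : Measure α}
    [IsFiniteMeasure μ] {χ : Measure ι} {κ : ι → Measure α}
    (h : ∀ s, MeasurableSet s → ∀ᵐ i ∂χ, κ i s = μ s) : ∀ᵐ i ∂χ, κ i = μ := by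
  set P := generatePiSystem (countableGeneratingSet α)
  have hgen : generateFrom P = ‹MeasurableSpace α› := by
    rw [generateFrom_generatePiSystem_eq, generateFrom_countableGeneratingSet]
  have hP : ∀ s ∈ P, MeasurableSet s := fun s hs => hgen ▸ measurableSet_generateFrom hs
  have hPae : ∀ᵐ i ∂χ, ∀ s ∈ P, κ i s = μ s :=
    (ae_ball_iff countable_countableGeneratingSet.generatePiSystem).2 fun s hs => h s (hP s hs)
  filter_upwards [h univ MeasurableSet.univ, hPae] with i huniv hi
  have : IsFiniteMeasure (κ i) := ⟨huniv ▸ measure_lt_top μ univ⟩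
  exact ext_of_generate_finite P hgen.symm (isPiSystem_generatePiSystem _) hi huniv

variable {f : α → α} {μ : Measure α} {χ : Measure ι} {κ : ι → Measure α}

lemma Ergodic.ae_apply_eq_of_bind_eq [IsProbabilityMeasure μ] [SigmaFinite χ]
    (hμ : Ergodic f μ) (hκ : Measurable κ)
    (hκinv : ∀ᵐ i ∂χ, IsProbabilityMeasure (κ i) ∧ MeasurePreserving f (κ i) (κ i))
    (hbind : χ.bind κ = μ) {s : Set α} (hs : MeasurableSet s) :
    ∀ᵐ i ∂χ, κ i s = μ s := by
  refine ae_eq_of_forall_setLIntegral_eq_of_sigmaFinite ((Measure.measurable_coe hs).comp hκ)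
    measurable_const fun E _ _ => ?_
  set ρ := (χ.restrict E).bind κ
  have hρ_apply : ∀ t, MeasurableSet t → ρ t = ∫⁻ i in E, κ i t ∂χ := fun t ht =>
    Measure.bind_apply ht hκ.aemeasurable
  have hκinvE := ae_restrict_of_ae (s := E) hκinv
  have hρμ : ρ ≤ μ := Measure.le_iff.2 fun t ht => by
    rw [hρ_apply t ht, ← hbind, Measure.bind_apply ht hκ.aemeasurable]
    exact setLIntegral_le_lintegral _ _
  have : IsFiniteMeasure ρ := isFiniteMeasure_of_le μ hρμ
  have hρinv : MeasurePreserving f ρ ρ := by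
    refine ⟨hμ.measurable, Measure.ext fun t ht => ?_⟩
    rw [Measure.map_apply hμ.measurable ht, hρ_apply _ (hμ.measurable ht), hρ_apply t ht]
    exact lintegral_congr_ae <| hκinvE.mono fun i hi => hi.2.measure_preimage ht.nullMeasurableSet
  obtain ⟨c, hc⟩ :=
    hμ.eq_smul_of_absolutelyContinuous hρinv (Measure.absolutelyContinuous_of_le hρμ)
  have hcE : c = χ E := by
    have hρuniv : ρ univ = ∫⁻ _ in E, 1 ∂χ := by
      rw [hρ_apply univ MeasurableSet.univ]
      exact lintegral_congr_ae <| hκinvE.mono fun i hi => hi.1.measure_univ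
    simpa [hc] using hρuniv
  rw [← hρ_apply s hs, setLIntegral_const, hc, hcE, Measure.smul_apply, smul_eq_mul, mul_comm]

lemma Ergodic.ae_eq_of_bind_eq [CountablyGenerated α] [IsProbabilityMeasure μ] [SigmaFinite χ]
    (hμ : Ergodic f μ) (hκ : Measurable κ)
    (hκinv : ∀ᵐ i ∂χ, IsProbabilityMeasure (κ i) ∧ MeasurePreserving f (κ i) (κ i))
    (hbind : χ.bind κ = μ) : ∀ᵐ i ∂χ, κ i = μ :=
  Measure.ae_eq_of_forall_ae_apply_eq fun _ hs => hμ.ae_apply_eq_of_bind_eq hκ hκinv hbind hs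

lemma Measure.apply_eq_of_le_of_compl_le {μ ν : Measure α} [IsProbabilityMeasure μ]
    [IsProbabilityMeasure ν] {s : Set α} (hs : MeasurableSet s) (h : μ s ≤ ν s)
    (hc : μ sᶜ ≤ ν sᶜ) : ν s = μ s := by
  refine le_antisymm ?_ h
  calc ν s = 1 - ν sᶜ := by rw [← prob_compl_eq_one_sub hs.compl, compl_compl]
    _ ≤ 1 - μ sᶜ := tsub_le_tsub_left hc 1
    _ = μ s := by rw [← prob_compl_eq_one_sub hs.compl, compl_compl]

lemma Measure.le_apply_of_map_eq_of_preimage_subset {ν : Measure α} {θ : α → α}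
    (hθ : Measurable θ) (hmap : ν.map θ = μ) {M D : Set α} (hM : MeasurableSet M)
    (hMc : μ Mᶜ = 0) (hD : MeasurableSet D) (hsub : θ ⁻¹' (M ∩ D) ⊆ D) : μ D ≤ ν D :=
  calc μ D = μ (M ∩ D) := by rw [inter_comm, measure_inter_conull hMc]
    _ = ν (θ ⁻¹' (M ∩ D)) := by rw [← hmap, Measure.map_apply hθ (hM.inter hD)]
    _ ≤ ν D := measure_mono hsub

end MeasureTheory

theorem ergodic_decomposition_shadows_general
    {Ω : Type*} [MetricSpace Ω] [CompactSpace Ω] [mΩ : MeasurableSpace Ω] [BorelSpace Ω]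
    (S : Ω ≃ₜ Ω)
    (μ ν : Measure Ω) [IsProbabilityMeasure μ]
    (hμerg : Ergodic S μ)
    (θ : Ω → Ω) (hθmeas : Measurable θ)
    (hθpush : Measure.map θ ν = μ)
    (hθequiv : θ ∘ S = S ∘ θ)
    (M₁ : Set Ω) (hM₁meas : MeasurableSet M₁) (hM₁ : μ M₁ = 1)
    (G : { m : MeasurableSpace Ω // m ≤ mΩ })
    (hGsep : ∀ D : Set Ω, MeasurableSet[G.1] D → θ ⁻¹' (M₁ ∩ D) ⊆ D)
    -- `χ` is the ergodic decomposition of `ν`: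
    (χ : Measure (Measure Ω)) [IsProbabilityMeasure χ]
    (hχerg : ∀ᵐ m ∂χ, IsProbabilityMeasure m ∧ Measure.map S m = m ∧ Ergodic S m)
    (hχrep : ∀ A : Set Ω, MeasurableSet A → ν A = ∫⁻ m, m A ∂χ) :
    ∀ᵐ m ∂χ, Measure.map θ m = μ ∧ ∀ D : Set Ω, MeasurableSet[G.1] D → m D = μ D := by
  have hκ : Measurable (Measure.map θ) := Measure.measurable_map θ hθmeas
  have hbind : χ.bind (Measure.map θ) = μ := Measure.ext fun A hA => by
    rw [Measure.bind_apply hA hκ.aemeasurable, ← hθpush, Measure.map_apply hθmeas hA,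
      hχrep _ (hθmeas hA)]
    exact lintegral_congr fun m => Measure.map_apply hθmeas hA
  have hκinv : ∀ᵐ m ∂χ, IsProbabilityMeasure (m.map θ) ∧
      MeasurePreserving S (m.map θ) (m.map θ) := hχerg.mono fun m ⟨hm, hSm, _⟩ =>
    ⟨Measure.isProbabilityMeasure_map hθmeas.aemeasurable,
      MeasurePreserving.of_semiconj ⟨hθmeas, rfl⟩ ⟨S.measurable, hSm⟩
        (congrFun hθequiv) S.measurable⟩
  have hM₁c : μ M₁ᶜ = 0 := by rw [prob_compl_eq_one_sub hM₁meas, hM₁, tsub_self]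
  filter_upwards [hμerg.ae_eq_of_bind_eq hκ hκinv hbind, hχerg] with m hmap hm
  have := hm.1
  refine ⟨hmap, fun D hD => ?_⟩
  have hle : ∀ C, MeasurableSet[G.1] C → μ C ≤ m C := fun C hC =>
    Measure.le_apply_of_map_eq_of_preimage_subset hθmeas hmap hM₁meas hM₁c (G.2 C hC) (hGsep C hC)
  exact Measure.apply_eq_of_le_of_compl_le (G.2 D hD) (hle D hD) (hle Dᶜ hD.compl)

/-- If `ν` `G`-shadows an `S`-ergodic measure `μ` via a factor map `θ` with `μ`-full set
`M₁` such that `θ⁻¹(M₁ ∩ D) ⊆ D` for each `D ∈ G`, then almost every measure in the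
ergodic decomposition `χ` of `ν` also `G`-shadows `μ`. -/
theorem ergodic_decomposition_shadows
    {Ω : Type*} [MetricSpace Ω] [CompactSpace Ω] [mΩ : MeasurableSpace Ω] [BorelSpace Ω]
    (S : Ω ≃ₜ Ω)
    (μ ν : Measure Ω) [IsProbabilityMeasure μ] [IsProbabilityMeasure ν]
    (hμinv : Measure.map S μ = μ) (hνinv : Measure.map S ν = ν)
    (hμerg : Ergodic S μ)
    (θ : Ω → Ω) (hθmeas : Measurable θ)
    (hθpush : Measure.map θ ν = μ)
    (hθequiv : θ ∘ S = S ∘ θ)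
    (M₁ : Set Ω) (hM₁meas : MeasurableSet M₁) (hM₁ : μ M₁ = 1)
    (G : { m : MeasurableSpace Ω // m ≤ mΩ })
    (hshadow : ∀ D : Set Ω, MeasurableSet[G.1] D → ν D = μ D)
    (hGsep : ∀ D : Set Ω, MeasurableSet[G.1] D → θ ⁻¹' (M₁ ∩ D) ⊆ D)
    -- `χ` is the ergodic decomposition of `ν`:
    (χ : Measure (Measure Ω)) [IsProbabilityMeasure χ]
    (hχerg : ∀ᵐ m ∂χ, IsProbabilityMeasure m ∧ Measure.map S m = m ∧ Ergodic S m)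
    (hχrep : ∀ A : Set Ω, MeasurableSet A → ν A = ∫⁻ m, m A ∂χ) :
    ∀ᵐ m ∂χ, Measure.map θ m = μ ∧ ∀ D : Set Ω, MeasurableSet[G.1] D → m D = μ D :=
  ergodic_decomposition_shadows_general (mΩ := mΩ) S μ ν hμerg θ hθmeas hθpush hθequiv M₁ hM₁meas
    hM₁ G hGsep χ hχerg hχrep
end

section
/- Let E: ℓ²(ℤ) → ℝ be a C² functional such that E(0)=0, ∇E(0)=0, the Hessian D²E(0) is invertible with ‖D²E(0)^{-1}‖^{-1} = Δ₂ > 0, and |E(h) − ½⟨D²E(0)h,h⟩| ≤ κ‖h‖³ and ‖∇E(h) − D²E(0)h‖ ≤ κ‖h‖² for all h. Then setting e₀ = Δ₂³/(32κ²), every h in the connected component of 0 of {E ≤ e₀} with E(h) = e₀ satisfies ‖∇E(h)‖² ≥ Δ₂·e₀. -/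
/-!
Integrating the bound on `∇E − A` along rays gives the Taylor estimate
`|E x − ½⟪A x, x⟫| ≤ (κ/3)‖x‖³`. Together with coercivity it forces `E > e₀` on the sphere
`‖x‖ = Δ₂/(2κ)`, so the connected component of `0` in `{E ≤ e₀}` lies inside that ball.
At a point `h` of the component with `E h = e₀`, Cauchy–Schwarz gives
`‖∇E(h)‖‖h‖ ≥ ⟪A h, h⟫ − κ‖h‖³`, while `⟪A h, h⟫` is bounded below both by `Δ₂‖h‖²` and, via the
Taylor estimate, by `2e₀ − (2κ/3)‖h‖³`; an elementary inequality in `κ‖h‖/Δ₂ ∈ (0, 1/2)` finishes.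
-/

open scoped RealInnerProductSpace

noncomputable abbrev l2Z : Type := lp (fun _ : ℤ => ℝ) 2

open Set

theorem norm_lt_of_mem_connectedComponentIn_sublevel {F : Type*} [SeminormedAddCommGroup F]
    {E : F → ℝ} {e R : ℝ} (hR : 0 ≤ R) (hER : ∀ x, ‖x‖ = R → e < E x) {x : F}
    (hx : x ∈ connectedComponentIn {y | E y ≤ e} 0) : ‖x‖ < R := by
  have h0 : (0 : F) ∈ connectedComponentIn {y | E y ≤ e} 0 :=
    mem_connectedComponentIn (connectedComponentIn_nonempty_iff.1 ⟨x, hx⟩)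
  by_contra! hRx
  obtain ⟨y, hy, hyR⟩ := isPreconnected_connectedComponentIn.intermediate_value h0 hx
    continuous_norm.continuousOn ⟨by simpa using hR, hRx⟩
  exact (hER y hyR).not_ge (connectedComponentIn_subset {y | E y ≤ e} 0 hy)

section InnerProductSpace

variable {F : Type*} [NormedAddCommGroup F] [InnerProductSpace ℝ F]

theorem abs_sub_sub_half_inner_le_of_norm_grad_sub_le {E : F → ℝ} (hE : Differentiable ℝ E)
    {g : F → F} (hgrad : ∀ h x, fderiv ℝ E h x = ⟪g h, x⟫) {A : F →L[ℝ] F} {κ : ℝ}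
    (hgbound : ∀ h, ‖g h - A h‖ ≤ κ * ‖h‖ ^ 2) (x : F) :
    |E x - E 0 - 1 / 2 * ⟪A x, x⟫| ≤ κ / 3 * ‖x‖ ^ 3 := by
  set a := ⟪A x, x⟫
  have hf : ∀ t : ℝ, HasDerivAt (fun t : ℝ => E (t • x) - E 0 - t ^ 2 / 2 * a)
      ⟪g (t • x) - A (t • x), x⟫ t := by
    intro t
    have hEt := (hE (t • x)).hasFDerivAt.comp_hasDerivAt t ((hasDerivAt_id t).smul_const x)
    refine ((hEt.sub_const (E 0)).sub
      (((hasDerivAt_pow 2 t).div_const 2).mul_const a)).congr_deriv ?_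
    simp [hgrad, inner_sub_left, real_inner_smul_left, a]
  have hB : ∀ t : ℝ, HasDerivAt (fun t : ℝ => κ / 3 * ‖x‖ ^ 3 * t ^ 3)
      (κ * ‖x‖ ^ 3 * t ^ 2) t := by
    intro t
    refine ((hasDerivAt_pow 3 t).const_mul (κ / 3 * ‖x‖ ^ 3)).congr_deriv ?_
    norm_num
    ring
  have hbound : ∀ t ∈ Ico (0 : ℝ) 1, ‖⟪g (t • x) - A (t • x), x⟫‖ ≤ κ * ‖x‖ ^ 3 * t ^ 2 := by
    intro t ht
    calc ‖⟪g (t • x) - A (t • x), x⟫‖ ≤ ‖g (t • x) - A (t • x)‖ * ‖x‖ := norm_inner_le_norm _ _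
      _ ≤ κ * ‖t • x‖ ^ 2 * ‖x‖ := by gcongr; exact hgbound _
      _ = κ * ‖x‖ ^ 3 * t ^ 2 := by rw [norm_smul, Real.norm_of_nonneg ht.1]; ring
  simpa using image_norm_le_of_norm_deriv_right_le_deriv_boundary
    (fun t _ => (hf t).continuousAt.continuousWithinAt) (fun t _ => (hf t).hasDerivWithinAt)
    (by simp) hB hbound (right_mem_Icc.2 zero_le_one)

theorem inner_sub_le_norm_mul_norm_of_norm_sub_le {g : F → F} {A : F →L[ℝ] F} {κ : ℝ}
    (hgbound : ∀ h, ‖g h - A h‖ ≤ κ * ‖h‖ ^ 2) (x : F) :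
    ⟪A x, x⟫ - κ * ‖x‖ ^ 3 ≤ ‖g x‖ * ‖x‖ := by
  have hrem : |⟪g x - A x, x⟫| ≤ κ * ‖x‖ ^ 3 :=
    calc |⟪g x - A x, x⟫| ≤ ‖g x - A x‖ * ‖x‖ := abs_real_inner_le_norm _ _
      _ ≤ κ * ‖x‖ ^ 2 * ‖x‖ := by gcongr; exact hgbound x
      _ = κ * ‖x‖ ^ 3 := by ring
  rw [inner_sub_left] at hrem
  linarith [(abs_le.1 hrem).1, real_inner_le_norm (g x) x]

end InnerProductSpace

/-- The hypotheses give `w ≥ v (d - v)` and `w ≥ (d³/16 - 5v³/3) / v`; the first is at least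
`0.177 d²` for `v ≥ 7d/30`, the second for `v ≤ 7d/30`, and `0.177² > 1/32`. -/
theorem le_of_levelSet_bounds_normalized {d v w b : ℝ} (hd : 0 < d) (hv : 0 < v)
    (hvd : 2 * v ≤ d) (hcs : b - v ^ 3 ≤ w * v) (hco : d * v ^ 2 ≤ b)
    (hup : d ^ 3 / 32 ≤ b / 2 + v ^ 3 / 3) :
    177 / 1000 * d ^ 2 ≤ w := by
  rcases le_or_gt (30 * v) (7 * d) with hsmall | hlarge
  · have hv3 : (30 * v) ^ 3 ≤ (7 * d) ^ 3 := pow_le_pow_left₀ (by positivity) hsmall 3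
    have : 177 / 1000 * d ^ 2 * v ≤ d ^ 3 / 16 - 5 * v ^ 3 / 3 := by nlinarith
    nlinarith
  · have : 161 / 900 * d ^ 2 ≤ v * (d - v) := by nlinarith
    nlinarith

theorem mul_div_le_sq_of_levelSet_bounds {Δ κ r a G : ℝ} (hΔ : 0 < Δ) (hκ : 0 < κ)
    (hr : 0 < r) (hrΔ : 2 * κ * r ≤ Δ) (hcs : a - κ * r ^ 3 ≤ G * r) (hco : Δ * r ^ 2 ≤ a)
    (hup : Δ ^ 3 / (32 * κ ^ 2) ≤ a / 2 + κ * r ^ 3 / 3) :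
    Δ * (Δ ^ 3 / (32 * κ ^ 2)) ≤ G ^ 2 := by
  have hκ2 : 0 < κ ^ 2 := by positivity
  have key : 177 / 1000 * Δ ^ 2 ≤ κ * G := by
    refine le_of_levelSet_bounds_normalized hΔ (mul_pos hκ hr) (by linarith)
      (b := κ ^ 2 * a) ?_ ?_ ?_
    · nlinarith [mul_le_mul_of_nonneg_left hcs hκ2.le]
    · nlinarith [mul_le_mul_of_nonneg_left hco hκ2.le]
    · have hscale : κ ^ 2 * (Δ ^ 3 / (32 * κ ^ 2)) = Δ ^ 3 / 32 := by field_simp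
      nlinarith [mul_le_mul_of_nonneg_left hup hκ2.le]
  rw [← mul_div_assoc, div_le_iff₀ (by positivity)]
  nlinarith [pow_le_pow_left₀ (by positivity) key 2]

theorem gradient_lower_bound_on_level_set_general
    (E : l2Z → ℝ) (hE : ContDiff ℝ 2 E) (hE0 : E 0 = 0)
    (g : l2Z → l2Z)
    (hgrad : ∀ h x : l2Z, fderiv ℝ E h x = ⟪g h, x⟫)
    (A : l2Z →L[ℝ] l2Z)
    (Δ₂ κ : ℝ) (hΔ₂ : 0 < Δ₂) (hκ : 0 < κ)
    (hcoercive : ∀ h : l2Z, ⟪A h, h⟫ ≥ Δ₂ * ‖h‖ ^ 2)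
    (hgbound : ∀ h : l2Z, ‖g h - A h‖ ≤ κ * ‖h‖ ^ 2)
    (e₀ : ℝ) (he₀ : e₀ = Δ₂ ^ 3 / (32 * κ ^ 2)) :
    ∀ h : l2Z, h ∈ connectedComponentIn {x : l2Z | E x ≤ e₀} 0 → E h = e₀ →
      ‖g h‖ ^ 2 ≥ Δ₂ * e₀ := by
  have htaylor := abs_sub_sub_half_inner_le_of_norm_grad_sub_le
    (hE.differentiable (by norm_num)) hgrad hgbound
  simp only [hE0, sub_zero] at htaylor
  intro h hmem hEh
  subst he₀
  have hr : 0 < ‖h‖ := norm_pos_iff.2 fun h0 => by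
    rw [h0, hE0] at hEh
    exact (show 0 < Δ₂ ^ 3 / (32 * κ ^ 2) by positivity).ne hEh
  have hsmall : ‖h‖ < Δ₂ / (2 * κ) := by
    refine norm_lt_of_mem_connectedComponentIn_sublevel (by positivity) (fun x hx => ?_) hmem
    have hgap : Δ₂ ^ 3 / (32 * κ ^ 2) < Δ₂ / 2 * ‖x‖ ^ 2 - κ / 3 * ‖x‖ ^ 3 := by
      rw [hx]
      field_simp
      nlinarith [pow_pos hΔ₂ 3]
    linarith [(abs_le.1 (htaylor x)).1, hcoercive x]
  rw [lt_div_iff₀ (by positivity)] at hsmall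
  exact mul_div_le_sq_of_levelSet_bounds hΔ₂ hκ hr (by linarith)
    (inner_sub_le_norm_mul_norm_of_norm_sub_le hgbound h) (hcoercive h)
    (by linarith [(abs_le.1 (htaylor h)).2])

/-- Near a non-degenerate minimum: if `E` is `C²` on `ℓ²(ℤ)` with `E(0)=0`, `∇E(0)=0`,
Hessian `A = D²E(0)` invertible and coercive with spectral gap `Δ₂ > 0`, and with cubic
remainder bounds `|E(h) − ½⟨Ah,h⟩| ≤ κ‖h‖³`, `‖∇E(h) − Ah‖ ≤ κ‖h‖²`, then for
`e₀ = Δ₂³/(32κ²)`, every `h` in the connected component of `0` of `{E ≤ e₀}` with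
`E(h) = e₀` satisfies `‖∇E(h)‖² ≥ Δ₂·e₀`. -/
theorem gradient_lower_bound_on_level_set
    (E : l2Z → ℝ) (hE : ContDiff ℝ 2 E) (hE0 : E 0 = 0)
    (g : l2Z → l2Z)
    (hgrad : ∀ h x : l2Z, fderiv ℝ E h x = ⟪g h, x⟫)
    (hg0 : g 0 = 0)
    (A : l2Z →L[ℝ] l2Z) (hAinv : ∃ Ainv : l2Z →L[ℝ] l2Z,
      Ainv.comp A = ContinuousLinearMap.id ℝ l2Z ∧
      A.comp Ainv = ContinuousLinearMap.id ℝ l2Z)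
    (Δ₂ κ : ℝ) (hΔ₂ : 0 < Δ₂) (hκ : 0 < κ)
    (hcoercive : ∀ h : l2Z, ⟪A h, h⟫ ≥ Δ₂ * ‖h‖ ^ 2)
    (hEbound : ∀ h : l2Z, |E h - (1 / 2) * ⟪A h, h⟫| ≤ κ * ‖h‖ ^ 3)
    (hgbound : ∀ h : l2Z, ‖g h - A h‖ ≤ κ * ‖h‖ ^ 2)
    (e₀ : ℝ) (he₀ : e₀ = Δ₂ ^ 3 / (32 * κ ^ 2)) :
    ∀ h : l2Z, h ∈ connectedComponentIn {x : l2Z | E x ≤ e₀} 0 → E h = e₀ →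
      ‖g h‖ ^ 2 ≥ Δ₂ * e₀ :=
  gradient_lower_bound_on_level_set_general E hE hE0 g hgrad A Δ₂ κ hΔ₂ hκ hcoercive hgbound e₀ he₀
end
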